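/- Assume the Verblunsky coefficients satisfy the decay hypothesis (1.5), and define R_n(z) = conj(α_n) Φ_n*(z) − S(z) Σ_{ℓ=1}^L conj(C_ℓ) conj(b_ℓ)^n for |z| ≤ 1. Then there exist Δ_1 ∈ (0,1) and C > 0 such that: (i) sup_{|z| ≤ 1} |R_n(z)| ≤ C (bΔ_1)^n for all n; (ii) for z in the annulus 𝔸 = {z : bΔ_1 < |z| < 1}, the series s_n(z) = Σ_{j=0}^∞ z^{-j-1} R_{n+j}(z) converges uniformly on compact subsets of 𝔸 and defines an analytic function on 𝔸; (iii) |s_n(z)| ≤ C (bΔ_1)^n (|z| − bΔ_1)^{-1} for all n and all z ∈ 𝔸; (iv) s_{n+1}(z) = z s_n(z) − R_n(z) for all n and all z ∈ 𝔸. -/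

import Mathlib

/-!
Since `|α_n| ≤ c bⁿ`, the products `∏ (1 + |α_k|)` bound `Φ_n` and `Φ_n*` uniformly on the closed
unit disk, and the telescoping identity `Φ_{n+1}* - Φ_n* = -α_n z Φ_n` gives `|Φ_n* - S| = O(bⁿ)`
there; in particular `S` is holomorphic in the open disk. Writing
`R_n = conj(α_n - Σ C_ℓ b_ℓⁿ) Φ_n* + conj(Σ C_ℓ b_ℓⁿ) (Φ_n* - S)`, the first term is `O((bΔ)ⁿ)`
and the second `O(b²ⁿ)`, so `R_n = O((bΔ₁)ⁿ)` with `Δ₁ = max Δ b`. The claims on `s_n` only use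
this bound: on `|z| ≥ ρ > bΔ₁` the series is dominated by a geometric series of ratio `bΔ₁ / ρ`,
and shifting the summation index gives `s_{n+1} = z s_n - R_n`.
-/

open Polynomial Filter Topology

/-- The monic orthogonal polynomials on the unit circle, defined by the Szegő
recursion `Φ₀ = 1`, `Φ_{n+1}(z) = z Φ_n(z) - conj(α_n) Φ_n^*(z)`, where the reversed
polynomial is `P^*(z) = Σ_{j=0}^n conj(c_{n-j}) z^j`. -/
noncomputable def PhiP (α : ℕ → ℂ) : ℕ → Polynomial ℂ
  | 0 => 1
  | n + 1 => X * PhiP α n -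
      Polynomial.C ((starRingEnd ℂ) (α n)) *
        Polynomial.reflect n (Polynomial.map (starRingEnd ℂ) (PhiP α n))

/-- The reversed polynomial `Φ_n^*(z) = z^n conj(Φ_n(1/conj z))`. -/
noncomputable def PhiStarP (α : ℕ → ℂ) (n : ℕ) : Polynomial ℂ :=
  Polynomial.reflect n (Polynomial.map (starRingEnd ℂ) (PhiP α n))

/-- `R_n(z) = conj(α_n) Φ_n^*(z) - S(z) Σ_ℓ conj(C_ℓ) conj(b_ℓ)^n`. -/
noncomputable def Rfun (α : ℕ → ℂ) (S : ℂ → ℂ) {L : ℕ} (Cs bs : Fin L → ℂ)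
    (n : ℕ) (z : ℂ) : ℂ :=
  (starRingEnd ℂ) (α n) * (PhiStarP α n).eval z -
    S z * ∑ ℓ : Fin L, (starRingEnd ℂ) (Cs ℓ) * ((starRingEnd ℂ) (bs ℓ)) ^ n

/-- `s_n(z) = Σ_{j=0}^∞ z^{-j-1} R_{n+j}(z)`. -/
noncomputable def sfun (α : ℕ → ℂ) (S : ℂ → ℂ) {L : ℕ} (Cs bs : Fin L → ℂ)
    (n : ℕ) (z : ℂ) : ℂ :=
  ∑' j : ℕ, (z ^ (j + 1))⁻¹ * Rfun α S Cs bs (n + j) z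

namespace Polynomial

variable {R : Type*} [Semiring R]

theorem reflect_succ_X_mul {f : R[X]} {n : ℕ} (hf : f.natDegree ≤ n) :
    reflect (n + 1) (X * f) = reflect n f := by
  simpa [add_comm] using reflect_mul X f natDegree_X_le hf

theorem reflect_succ_reflect {f : R[X]} {n : ℕ} (hf : f.natDegree ≤ n) :
    reflect (n + 1) (reflect n f) = X * f := by
  rw [← reflect_succ_X_mul hf, reflect_reflect]

end Polynomial

section Szego

variable (α : ℕ → ℂ)

theorem PhiP_succ (n : ℕ) :
    PhiP α (n + 1) = X * PhiP α n - C ((starRingEnd ℂ) (α n)) * PhiStarP α n := rfl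

theorem natDegree_PhiP_le (n : ℕ) : (PhiP α n).natDegree ≤ n := by
  induction n with
  | zero => simp [PhiP]
  | succ n ih =>
    rw [PhiP_succ]
    refine (natDegree_sub_le _ _).trans (max_le ?_ ?_)
    · exact natDegree_mul_le.trans (by have := natDegree_X_le (R := ℂ); omega)
    · refine natDegree_C_mul_le _ _ |>.trans (natDegree_reflect_le.trans ?_)
      exact max_le (by omega) (natDegree_map_le.trans (by omega))

theorem PhiStarP_succ (n : ℕ) :
    PhiStarP α (n + 1) = PhiStarP α n - C (α n) * (X * PhiP α n) := by
  have hconj : ((PhiP α n).map (starRingEnd ℂ)).map (starRingEnd ℂ) = PhiP α n := by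
    simp [Polynomial.map_map]
  have hdeg : ((PhiP α n).map (starRingEnd ℂ)).natDegree ≤ n :=
    natDegree_map_le.trans (natDegree_PhiP_le α n)
  rw [PhiStarP, PhiP_succ, PhiStarP, Polynomial.map_sub, Polynomial.map_mul, Polynomial.map_mul,
    map_C, Complex.conj_conj, Polynomial.map_X, ← reflect_map, hconj, reflect_sub,
    reflect_succ_X_mul hdeg, reflect_C_mul, reflect_succ_reflect (natDegree_PhiP_le α n)]

theorem eval_PhiP_succ (n : ℕ) (z : ℂ) :
    (PhiP α (n + 1)).eval z =
      z * (PhiP α n).eval z - (starRingEnd ℂ) (α n) * (PhiStarP α n).eval z := by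
  simp [PhiP_succ]

theorem eval_PhiStarP_succ (n : ℕ) (z : ℂ) :
    (PhiStarP α (n + 1)).eval z = (PhiStarP α n).eval z - α n * (z * (PhiP α n).eval z) := by
  simp [PhiStarP_succ]

end Szego

theorem tendstoUniformlyOn_of_norm_sub_le_geometric {β E : Type*} [NormedAddCommGroup E]
    {F : ℕ → β → E} {f : β → E} {s : Set β} {K b : ℝ} (hb0 : 0 ≤ b) (hb1 : b < 1)
    (h : ∀ n, ∀ x ∈ s, ‖F n x - f x‖ ≤ K * b ^ n) : TendstoUniformlyOn F f atTop s := by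
  rw [Metric.tendstoUniformlyOn_iff]
  intro ε hε
  have hlim : Tendsto (fun n => K * b ^ n) atTop (𝓝 0) := by
    simpa using (tendsto_pow_atTop_nhds_zero_of_lt_one hb0 hb1).const_mul K
  filter_upwards [hlim.eventually (gt_mem_nhds hε)] with n hn x hx
  rw [dist_comm, dist_eq_norm]
  exact (h n x hx).trans_lt hn

section PhiBounds

variable (α : ℕ → ℂ)

theorem norm_eval_PhiP_le_prod {z : ℂ} (hz : ‖z‖ ≤ 1) (n : ℕ) :
    ‖(PhiP α n).eval z‖ ≤ ∏ k ∈ Finset.range n, (1 + ‖α k‖) ∧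
      ‖(PhiStarP α n).eval z‖ ≤ ∏ k ∈ Finset.range n, (1 + ‖α k‖) := by
  induction n with
  | zero => simp [PhiP, PhiStarP]
  | succ n ih =>
    obtain ⟨hΦ, hΦstar⟩ := ih
    set P := ∏ k ∈ Finset.range n, (1 + ‖α k‖)
    have hzΦ : ‖z * (PhiP α n).eval z‖ ≤ P := by
      simpa [norm_mul] using mul_le_mul hz hΦ (norm_nonneg _) zero_le_one
    rw [Finset.prod_range_succ, eval_PhiP_succ, eval_PhiStarP_succ]
    constructor
    · calc _ ≤ ‖z * (PhiP α n).eval z‖ + ‖α n‖ * ‖(PhiStarP α n).eval z‖ :=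
            (norm_sub_le _ _).trans_eq (by rw [norm_mul (starRingEnd ℂ _), Complex.norm_conj])
        _ ≤ P + ‖α n‖ * P := by gcongr
        _ = P * (1 + ‖α n‖) := by ring
    · calc _ ≤ ‖(PhiStarP α n).eval z‖ + ‖α n‖ * ‖z * (PhiP α n).eval z‖ :=
            (norm_sub_le _ _).trans_eq (by rw [norm_mul (α n)])
        _ ≤ P + ‖α n‖ * P := by gcongr
        _ = P * (1 + ‖α n‖) := by ring

theorem exists_norm_eval_PhiP_le (hα : Summable fun n => ‖α n‖) :
    ∃ M, 0 < M ∧ ∀ n (z : ℂ), ‖z‖ ≤ 1 →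
      ‖(PhiP α n).eval z‖ ≤ M ∧ ‖(PhiStarP α n).eval z‖ ≤ M := by
  refine ⟨Real.exp (∑' k, ‖α k‖), Real.exp_pos _, fun n z hz => ?_⟩
  have hprod : ∏ k ∈ Finset.range n, (1 + ‖α k‖) ≤ Real.exp (∑' k, ‖α k‖) :=
    (Real.prod_one_add_le_exp_sum _ fun k => norm_nonneg _).trans
      (Real.exp_le_exp.mpr (hα.sum_le_tsum _ fun k _ => norm_nonneg _))
  obtain ⟨hΦ, hΦstar⟩ := norm_eval_PhiP_le_prod α hz n
  exact ⟨hΦ.trans hprod, hΦstar.trans hprod⟩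

theorem norm_eval_PhiStarP_sub_le {z s : ℂ} {M c b : ℝ} (hz : ‖z‖ ≤ 1)
    (hΦ : ∀ n, ‖(PhiP α n).eval z‖ ≤ M) (hb1 : b < 1) (hαc : ∀ n, ‖α n‖ ≤ c * b ^ n)
    (hs : Tendsto (fun n => (PhiStarP α n).eval z) atTop (𝓝 s)) (n : ℕ) :
    ‖(PhiStarP α n).eval z - s‖ ≤ c * M * b ^ n / (1 - b) := by
  have hstep : ∀ k, dist ((PhiStarP α k).eval z) ((PhiStarP α (k + 1)).eval z) ≤
      c * M * b ^ k := by
    intro k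
    have hαk : 0 ≤ c * b ^ k := (norm_nonneg _).trans (hαc k)
    rw [dist_eq_norm, eval_PhiStarP_succ, sub_sub_cancel, norm_mul, norm_mul]
    calc ‖α k‖ * (‖z‖ * ‖(PhiP α k).eval z‖) ≤ c * b ^ k * (1 * M) :=
          mul_le_mul (hαc k) (mul_le_mul hz (hΦ k) (norm_nonneg _) zero_le_one)
            (by positivity) hαk
      _ = c * M * b ^ k := by ring
  simpa [dist_eq_norm] using dist_le_of_le_geometric_of_tendsto b (c * M) hb1 hstep hs n

theorem exists_norm_eval_PhiStarP_sub_le {S : ℂ → ℂ} {c b : ℝ} (hb0 : 0 ≤ b) (hb1 : b < 1)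
    (hαc : ∀ n, ‖α n‖ ≤ c * b ^ n)
    (hS : ∀ z : ℂ, ‖z‖ ≤ 1 → Tendsto (fun n => (PhiStarP α n).eval z) atTop (𝓝 (S z))) :
    ∃ M K, 0 < M ∧ 0 ≤ K ∧ ∀ n (z : ℂ), ‖z‖ ≤ 1 →
      ‖(PhiStarP α n).eval z‖ ≤ M ∧ ‖(PhiStarP α n).eval z - S z‖ ≤ K * b ^ n := by
  have hc : 0 ≤ c := by simpa using (norm_nonneg _).trans (hαc 0)
  have hα : Summable fun n => ‖α n‖ :=
    .of_nonneg_of_le (fun n => norm_nonneg _) hαc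
      ((summable_geometric_of_lt_one hb0 hb1).mul_left c)
  obtain ⟨M, hM0, hM⟩ := exists_norm_eval_PhiP_le α hα
  refine ⟨M, c * M / (1 - b), hM0, by have := sub_pos.mpr hb1; positivity, fun n z hz => ?_⟩
  refine ⟨(hM n z hz).2, ?_⟩
  have := norm_eval_PhiStarP_sub_le α hz (fun k => (hM k z hz).1) hb1 hαc (hS z hz) n
  rwa [mul_div_right_comm] at this

theorem differentiableOn_of_tendsto_PhiStarP {S : ℂ → ℂ} {c b : ℝ} (hb0 : 0 ≤ b)
    (hb1 : b < 1) (hαc : ∀ n, ‖α n‖ ≤ c * b ^ n)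
    (hS : ∀ z : ℂ, ‖z‖ ≤ 1 → Tendsto (fun n => (PhiStarP α n).eval z) atTop (𝓝 (S z))) :
    DifferentiableOn ℂ S (Metric.ball 0 1) := by
  obtain ⟨M, K, -, -, hMK⟩ := exists_norm_eval_PhiStarP_sub_le α hb0 hb1 hαc hS
  have hunif : TendstoUniformlyOn (fun n z => (PhiStarP α n).eval z) S atTop
      (Metric.ball 0 1) :=
    tendstoUniformlyOn_of_norm_sub_le_geometric hb0 hb1 fun n z hz =>
      (hMK n z (mem_ball_zero_iff.mp hz).le).2
  exact hunif.tendstoLocallyUniformlyOn.differentiableOn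
    (.of_forall fun n => (PhiStarP α n).differentiable.differentiableOn) Metric.isOpen_ball

end PhiBounds

section Remainder

variable {L : ℕ} {Cs bs : Fin L → ℂ}

theorem norm_sum_mul_pow_le {b : ℝ} (habs : ∀ ℓ, ‖bs ℓ‖ ≤ b) (n : ℕ) :
    ‖∑ ℓ, Cs ℓ * bs ℓ ^ n‖ ≤ (∑ ℓ, ‖Cs ℓ‖) * b ^ n := by
  rw [Finset.sum_mul]
  refine (norm_sum_le _ _).trans (Finset.sum_le_sum fun ℓ _ => ?_)
  rw [norm_mul, norm_pow]
  gcongr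
  exact habs ℓ

theorem norm_le_of_norm_sub_sum_mul_pow_le {α : ℕ → ℂ} {b Δ A : ℝ} (hb0 : 0 ≤ b)
    (hΔ0 : 0 ≤ Δ) (hΔ1 : Δ ≤ 1) (hA : 0 ≤ A) (habs : ∀ ℓ, ‖bs ℓ‖ ≤ b)
    (hdecay : ∀ n : ℕ, ‖α n - ∑ ℓ, Cs ℓ * bs ℓ ^ n‖ ≤ A * (b * Δ) ^ n) (n : ℕ) :
    ‖α n‖ ≤ (A + ∑ ℓ, ‖Cs ℓ‖) * b ^ n := by
  have hbΔ : (b * Δ) ^ n ≤ b ^ n :=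
    pow_le_pow_left₀ (by positivity) (mul_le_of_le_one_right hb0 hΔ1) n
  calc ‖α n‖ ≤ ‖α n - ∑ ℓ, Cs ℓ * bs ℓ ^ n‖ + ‖∑ ℓ, Cs ℓ * bs ℓ ^ n‖ := norm_le_norm_sub_add _ _
    _ ≤ A * b ^ n + (∑ ℓ, ‖Cs ℓ‖) * b ^ n := by
      gcongr
      exacts [(hdecay n).trans (by gcongr), norm_sum_mul_pow_le habs n]
    _ = (A + ∑ ℓ, ‖Cs ℓ‖) * b ^ n := by ring

theorem Rfun_eq (α : ℕ → ℂ) (S : ℂ → ℂ) (n : ℕ) (z : ℂ) :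
    Rfun α S Cs bs n z =
      (starRingEnd ℂ) (α n - ∑ ℓ, Cs ℓ * bs ℓ ^ n) * (PhiStarP α n).eval z +
        (starRingEnd ℂ) (∑ ℓ, Cs ℓ * bs ℓ ^ n) * ((PhiStarP α n).eval z - S z) := by
  simp only [Rfun, map_sub, map_sum, map_mul, map_pow]
  ring

theorem norm_Rfun_le (α : ℕ → ℂ) (S : ℂ → ℂ) (n : ℕ) (z : ℂ) {M K : ℝ}
    (hΦ : ‖(PhiStarP α n).eval z‖ ≤ M) (hS : ‖(PhiStarP α n).eval z - S z‖ ≤ K) :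
    ‖Rfun α S Cs bs n z‖ ≤
      ‖α n - ∑ ℓ, Cs ℓ * bs ℓ ^ n‖ * M + ‖∑ ℓ, Cs ℓ * bs ℓ ^ n‖ * K := by
  rw [Rfun_eq]
  refine (norm_add_le _ _).trans ?_
  simp only [norm_mul, Complex.norm_conj]
  gcongr

theorem exists_norm_Rfun_le {α : ℕ → ℂ} {S : ℂ → ℂ} {b Δ A : ℝ} (hb0 : 0 ≤ b) (hb1 : b < 1)
    (habs : ∀ ℓ, ‖bs ℓ‖ = b) (hΔ0 : 0 ≤ Δ) (hΔ1 : Δ < 1) (hA : 0 < A)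
    (hdecay : ∀ n : ℕ, ‖α n - ∑ ℓ, Cs ℓ * bs ℓ ^ n‖ ≤ A * (b * Δ) ^ n)
    (hS : ∀ z : ℂ, ‖z‖ ≤ 1 → Tendsto (fun n => (PhiStarP α n).eval z) atTop (𝓝 (S z))) :
    ∃ C, 0 < C ∧ ∀ n (z : ℂ), ‖z‖ ≤ 1 → ‖Rfun α S Cs bs n z‖ ≤ C * (b * max Δ b) ^ n := by
  have habs' : ∀ ℓ, ‖bs ℓ‖ ≤ b := fun ℓ => (habs ℓ).le
  obtain ⟨M, K, hM0, hK0, hMK⟩ := exists_norm_eval_PhiStarP_sub_le α hb0 hb1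
    (norm_le_of_norm_sub_sum_mul_pow_le hb0 hΔ0 hΔ1.le hA.le habs' hdecay) hS
  set B := ∑ ℓ, ‖Cs ℓ‖
  refine ⟨A * M + B * K, by positivity, fun n z hz => ?_⟩
  obtain ⟨hΦ, hSΦ⟩ := hMK n z hz
  have hΔr : (b * Δ) ^ n ≤ (b * max Δ b) ^ n := by gcongr; exact le_max_left _ _
  have hbr : b ^ n * b ^ n ≤ (b * max Δ b) ^ n := by
    rw [← mul_pow]; gcongr; exact le_max_right _ _
  calc ‖Rfun α S Cs bs n z‖ ≤ A * (b * Δ) ^ n * M + B * b ^ n * (K * b ^ n) :=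
        (norm_Rfun_le α S n z hΦ hSΦ).trans
          (by gcongr; exacts [hdecay n, norm_sum_mul_pow_le habs' n])
    _ = A * M * (b * Δ) ^ n + B * K * (b ^ n * b ^ n) := by ring
    _ ≤ A * M * (b * max Δ b) ^ n + B * K * (b * max Δ b) ^ n := by gcongr
    _ = (A * M + B * K) * (b * max Δ b) ^ n := by ring

end Remainder

section TailSeries

/-- `sfun α S Cs bs` is `tailSeries (Rfun α S Cs bs)` by definition. -/
noncomputable def tailSeries (R : ℕ → ℂ → ℂ) (n : ℕ) (z : ℂ) : ℂ :=
  ∑' j : ℕ, (z ^ (j + 1))⁻¹ * R (n + j) z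

variable {R : ℕ → ℂ → ℂ} {C r : ℝ}

theorem norm_tailSeries_term_le {z : ℂ} {ρ : ℝ} (hρ : 0 < ρ)
    (hρz : ρ ≤ ‖z‖) (hR : ∀ m, ‖R m z‖ ≤ C * r ^ m) (n j : ℕ) :
    ‖(z ^ (j + 1))⁻¹ * R (n + j) z‖ ≤ C * r ^ n / ρ * (r / ρ) ^ j := by
  rw [norm_mul, norm_inv, norm_pow]
  calc (‖z‖ ^ (j + 1))⁻¹ * ‖R (n + j) z‖ ≤ (ρ ^ (j + 1))⁻¹ * (C * r ^ (n + j)) := by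
        gcongr
        exact hR _
    _ = C * r ^ n / ρ * (r / ρ) ^ j := by
        rw [pow_add, div_pow, pow_succ]
        field_simp
        ring

theorem hasSum_div_mul_geometric (a : ℝ) {ρ : ℝ} (hr : 0 ≤ r) (hrρ : r < ρ) :
    HasSum (fun j : ℕ => a / ρ * (r / ρ) ^ j) (a * (ρ - r)⁻¹) := by
  have hρ : 0 < ρ := hr.trans_lt hrρ
  have hsum : a * (ρ - r)⁻¹ = a / ρ * (1 - r / ρ)⁻¹ := by
    have : ρ - r ≠ 0 := (sub_pos.mpr hrρ).ne'
    field_simp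
  rw [hsum]
  exact (hasSum_geometric_of_lt_one (div_nonneg hr hρ.le) ((div_lt_one hρ).mpr hrρ)).mul_left _

theorem summable_tailSeries {z : ℂ} (hr : 0 ≤ r) (hrz : r < ‖z‖)
    (hR : ∀ m, ‖R m z‖ ≤ C * r ^ m) (n : ℕ) :
    Summable fun j : ℕ => (z ^ (j + 1))⁻¹ * R (n + j) z :=
  .of_norm_bounded (hasSum_div_mul_geometric _ hr hrz).summable
    (norm_tailSeries_term_le (hr.trans_lt hrz) le_rfl hR n)

theorem norm_tailSeries_le {z : ℂ} (hr : 0 ≤ r) (hrz : r < ‖z‖)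
    (hR : ∀ m, ‖R m z‖ ≤ C * r ^ m) (n : ℕ) :
    ‖tailSeries R n z‖ ≤ C * r ^ n * (‖z‖ - r)⁻¹ :=
  tsum_of_norm_bounded (hasSum_div_mul_geometric _ hr hrz)
    (norm_tailSeries_term_le (hr.trans_lt hrz) le_rfl hR n)

theorem tailSeries_succ {z : ℂ} (hz : z ≠ 0) {n : ℕ}
    (hs : Summable fun j : ℕ => (z ^ (j + 1))⁻¹ * R (n + j) z) :
    tailSeries R (n + 1) z = z * tailSeries R n z - R n z := by
  have hshift : ∀ j : ℕ, (z ^ (j + 1))⁻¹ * R (n + 1 + j) z =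
      z * ((z ^ (j + 1 + 1))⁻¹ * R (n + (j + 1)) z) := by
    intro j
    rw [show n + 1 + j = n + (j + 1) by omega, pow_succ _ (j + 1)]
    field_simp
  rw [tailSeries, tsum_congr hshift, tsum_mul_left, tailSeries, hs.tsum_eq_zero_add, zero_add,
    pow_one, add_zero, mul_add, mul_inv_cancel_left₀ hz, add_sub_cancel_left]

theorem tendstoUniformlyOn_tailSeries {K : Set ℂ} (hK : IsCompact K) (hr : 0 ≤ r)
    (hKr : ∀ z ∈ K, r < ‖z‖) (hR : ∀ m, ∀ z ∈ K, ‖R m z‖ ≤ C * r ^ m) (n : ℕ) :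
    TendstoUniformlyOn (fun N z => ∑ j ∈ Finset.range N, (z ^ (j + 1))⁻¹ * R (n + j) z)
      (tailSeries R n) atTop K := by
  rcases K.eq_empty_or_nonempty with rfl | hne
  · exact tendstoUniformlyOn_empty
  obtain ⟨z₀, hz₀, hmin⟩ := hK.exists_isMinOn hne continuous_norm.continuousOn
  exact tendstoUniformlyOn_tsum_nat (hasSum_div_mul_geometric _ hr (hKr z₀ hz₀)).summable
    fun j z hz => norm_tailSeries_term_le (hr.trans_lt (hKr z₀ hz₀)) (hmin hz)
      (fun m => hR m z hz) n j

theorem analyticOnNhd_tailSeries {U : Set ℂ} (hU : IsOpen U) (hr : 0 ≤ r)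
    (hUr : ∀ z ∈ U, r < ‖z‖) (hR : ∀ m, ∀ z ∈ U, ‖R m z‖ ≤ C * r ^ m)
    (hdiff : ∀ m, DifferentiableOn ℂ (R m) U) (n : ℕ) :
    AnalyticOnNhd ℂ (tailSeries R n) U := by
  have hlim := (tendstoLocallyUniformlyOn_iff_forall_isCompact hU).mpr fun K hKU hK =>
    tendstoUniformlyOn_tailSeries hK hr (fun z hz => hUr z (hKU hz))
      (fun m z hz => hR m z (hKU hz)) n
  have hterm : ∀ j, DifferentiableOn ℂ (fun z => (z ^ (j + 1))⁻¹ * R (n + j) z) U := fun j =>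
    ((differentiableOn_pow _).inv fun z hz =>
      pow_ne_zero _ (norm_pos_iff.mp (hr.trans_lt (hUr z hz)))).mul (hdiff _)
  refine DifferentiableOn.analyticOnNhd ?_ hU
  exact hlim.differentiableOn (.of_forall fun N => .fun_sum fun j _ => hterm j) hU

end TailSeries

theorem stmt_12_general (α : ℕ → ℂ)
    (L : ℕ) (b Δ A : ℝ) (bs Cs : Fin L → ℂ)
    (hb0 : 0 < b) (hb1 : b < 1)
    (habs : ∀ ℓ, ‖bs ℓ‖ = b)
    (hΔ0 : 0 < Δ) (hΔ1 : Δ < 1) (hA : 0 < A)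
    (hdecay : ∀ n : ℕ,
      ‖α n - ∑ ℓ : Fin L, Cs ℓ * bs ℓ ^ n‖ ≤ A * (b * Δ) ^ n)
    (S : ℂ → ℂ)
    (hS : ∀ z : ℂ, ‖z‖ < 1 / b →
      Tendsto (fun n : ℕ => (PhiStarP α n).eval z) atTop (nhds (S z)))
 :
    ∃ Δ₁ : ℝ, 0 < Δ₁ ∧ Δ₁ < 1 ∧ ∃ C : ℝ, 0 < C ∧
      (∀ n : ℕ, ∀ z : ℂ, ‖z‖ ≤ 1 →
        ‖Rfun α S Cs bs n z‖ ≤ C * (b * Δ₁) ^ n) ∧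
      (∀ n : ℕ, ∀ z : ℂ, b * Δ₁ < ‖z‖ → ‖z‖ < 1 →
        Summable (fun j : ℕ => (z ^ (j + 1))⁻¹ * Rfun α S Cs bs (n + j) z)) ∧
      (∀ n : ℕ, ∀ K : Set ℂ,
        K ⊆ {z : ℂ | b * Δ₁ < ‖z‖ ∧ ‖z‖ < 1} → IsCompact K →
        TendstoUniformlyOn
          (fun (N : ℕ) (z : ℂ) =>
            ∑ j ∈ Finset.range N, (z ^ (j + 1))⁻¹ * Rfun α S Cs bs (n + j) z)
          (sfun α S Cs bs n) atTop K) ∧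
      (∀ n : ℕ, AnalyticOnNhd ℂ (sfun α S Cs bs n)
        {z : ℂ | b * Δ₁ < ‖z‖ ∧ ‖z‖ < 1}) ∧
      (∀ n : ℕ, ∀ z : ℂ, b * Δ₁ < ‖z‖ → ‖z‖ < 1 →
        ‖sfun α S Cs bs n z‖ ≤
          C * (b * Δ₁) ^ n * (‖z‖ - b * Δ₁)⁻¹) ∧
      (∀ n : ℕ, ∀ z : ℂ, b * Δ₁ < ‖z‖ → ‖z‖ < 1 →
        sfun α S Cs bs (n + 1) z = z * sfun α S Cs bs n z - Rfun α S Cs bs n z) := by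
  have hS₁ : ∀ z : ℂ, ‖z‖ ≤ 1 → Tendsto (fun n => (PhiStarP α n).eval z) atTop (𝓝 (S z)) :=
    fun z hz => hS z (hz.trans_lt (one_lt_one_div hb0 hb1))
  have hαc := norm_le_of_norm_sub_sum_mul_pow_le hb0.le hΔ0.le hΔ1.le hA.le
    (fun ℓ => (habs ℓ).le) hdecay
  have hSdiff := differentiableOn_of_tendsto_PhiStarP α hb0.le hb1 hαc hS₁
  obtain ⟨C, hC0, hR⟩ := exists_norm_Rfun_le hb0.le hb1 habs hΔ0.le hΔ1 hA hdecay hS₁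
  set r := b * max Δ b
  have hr : 0 ≤ r := by positivity
  have hU : IsOpen {z : ℂ | r < ‖z‖ ∧ ‖z‖ < 1} :=
    (isOpen_lt continuous_const continuous_norm).inter (isOpen_lt continuous_norm continuous_const)
  have hRdiff : ∀ m, DifferentiableOn ℂ (Rfun α S Cs bs m) {z : ℂ | r < ‖z‖ ∧ ‖z‖ < 1} :=
    fun m => ((PhiStarP α m).differentiable.differentiableOn.const_mul _).sub
      ((hSdiff.mono fun z hz => mem_ball_zero_iff.mpr hz.2).mul_const _)
  refine ⟨max Δ b, lt_max_of_lt_left hΔ0, max_lt hΔ1 hb1, C, hC0, hR,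
    fun n z hrz hz => summable_tailSeries hr hrz (fun m => hR m z hz.le) n,
    fun n K hKU hK => tendstoUniformlyOn_tailSeries hK hr (fun z hz => (hKU hz).1)
      (fun m z hz => hR m z (hKU hz).2.le) n,
    fun n => analyticOnNhd_tailSeries hU hr (fun z hz => hz.1) (fun m z hz => hR m z hz.2.le)
      hRdiff n,
    fun n z hrz hz => norm_tailSeries_le hr hrz (fun m => hR m z hz.le) n,
    fun n z hrz hz => tailSeries_succ (norm_pos_iff.mp (hr.trans_lt hrz))
      (summable_tailSeries hr hrz (fun m => hR m z hz.le) n)⟩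

theorem stmt_12 (α : ℕ → ℂ) (hα : ∀ n, ‖α n‖ < 1)
    (L : ℕ) (hL : 1 ≤ L) (b Δ A : ℝ) (bs Cs : Fin L → ℂ)
    (hb0 : 0 < b) (hb1 : b < 1) (hinj : Function.Injective bs)
    (habs : ∀ ℓ, ‖bs ℓ‖ = b) (hCs : ∀ ℓ, Cs ℓ ≠ 0)
    (hΔ0 : 0 < Δ) (hΔ1 : Δ < 1) (hA : 0 < A)
    (hdecay : ∀ n : ℕ,
      ‖α n - ∑ ℓ : Fin L, Cs ℓ * bs ℓ ^ n‖ ≤ A * (b * Δ) ^ n)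
    (S : ℂ → ℂ)
    (hS : ∀ z : ℂ, ‖z‖ < 1 / b →
      Tendsto (fun n : ℕ => (PhiStarP α n).eval z) atTop (nhds (S z)))
 :
    ∃ Δ₁ : ℝ, 0 < Δ₁ ∧ Δ₁ < 1 ∧ ∃ C : ℝ, 0 < C ∧
      (∀ n : ℕ, ∀ z : ℂ, ‖z‖ ≤ 1 →
        ‖Rfun α S Cs bs n z‖ ≤ C * (b * Δ₁) ^ n) ∧
      (∀ n : ℕ, ∀ z : ℂ, b * Δ₁ < ‖z‖ → ‖z‖ < 1 →
        Summable (fun j : ℕ => (z ^ (j + 1))⁻¹ * Rfun α S Cs bs (n + j) z)) ∧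
      (∀ n : ℕ, ∀ K : Set ℂ,
        K ⊆ {z : ℂ | b * Δ₁ < ‖z‖ ∧ ‖z‖ < 1} → IsCompact K →
        TendstoUniformlyOn
          (fun (N : ℕ) (z : ℂ) =>
            ∑ j ∈ Finset.range N, (z ^ (j + 1))⁻¹ * Rfun α S Cs bs (n + j) z)
          (sfun α S Cs bs n) atTop K) ∧
      (∀ n : ℕ, AnalyticOnNhd ℂ (sfun α S Cs bs n)
        {z : ℂ | b * Δ₁ < ‖z‖ ∧ ‖z‖ < 1}) ∧
      (∀ n : ℕ, ∀ z : ℂ, b * Δ₁ < ‖z‖ → ‖z‖ < 1 →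
        ‖sfun α S Cs bs n z‖ ≤
          C * (b * Δ₁) ^ n * (‖z‖ - b * Δ₁)⁻¹) ∧
      (∀ n : ℕ, ∀ z : ℂ, b * Δ₁ < ‖z‖ → ‖z‖ < 1 →
        sfun α S Cs bs (n + 1) z = z * sfun α S Cs bs n z - Rfun α S Cs bs n z) :=
  stmt_12_general α L b Δ A bs Cs hb0 hb1 habs hΔ0 hΔ1 hA hdecay S hS
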